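/- arXiv:2602.17062 — 5 statements merged into one kernel-verified Lean document; each statement's English description precedes it below -/
import Mathlib

section
/- Let A be a finite nonempty set and Q : A → ℝ. Fix K ∈ ℕ and pairwise distinct elements a_0, …, a_K of A satisfying Q(a_0) ≥ Q(a_1) ≥ … ≥ Q(a_K) and Q(a_K) ≥ Q(b) for every b ∈ A \ {a_0,…,a_K}. Let C > 0 and α ∈ ℝ, and for 0 ≤ k ≤ K define Q_k^sub : A → ℝ by Q_k^sub(b) = Q(b) − α·max(Q(b), C) if b ∈ {a_0,…,a_{k−1}} and Q_k^sub(b) = Q(b) otherwise. If α ≥ (Q(a_j) − Q(a_k))/max(Q(a_j), C) for all indices 0 ≤ j < k ≤ K, then for every k ∈ {0,…,K} the element a_k is a maximizer of Q_k^sub, i.e., Q_k^sub(b) ≤ Q_k^sub(a_k) for all b ∈ A. -/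
/-- The `k`-th sub-value function of successive sub-value Q-learning:
`Qsub Q a C α k b = Q b − α·max (Q b) C` if `b ∈ {a_0, …, a_{k−1}}`,
and `Qsub Q a C α k b = Q b` otherwise. -/
noncomputable def Qsub {A : Type*} [DecidableEq A] (Q : A → ℝ) {K : ℕ}
    (a : Fin (K + 1) → A) (C α : ℝ) (k : Fin (K + 1)) (b : A) : ℝ :=
  if ∃ j : Fin (K + 1), j < k ∧ a j = b then Q b - α * max (Q b) C else Q b

/-- If `α ≥ (Q(a_j) − Q(a_k)) / max(Q(a_j), C)` for all `j < k`, then for every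
`k ∈ {0, …, K}` the element `a_k` is a maximizer of `Q_k^sub`. -/
theorem stmt0 {A : Type*} [Fintype A] [Nonempty A] [DecidableEq A]
    (Q : A → ℝ) (K : ℕ) (a : Fin (K + 1) → A)
    (ha : Function.Injective a)
    (hord : ∀ j k : Fin (K + 1), j ≤ k → Q (a k) ≤ Q (a j))
    (hout : ∀ b : A, b ∉ Set.range a → Q b ≤ Q (a (Fin.last K)))
    (C : ℝ) (hC : 0 < C) (α : ℝ)
    (hα : ∀ j k : Fin (K + 1), j < k →
      (Q (a j) - Q (a k)) / max (Q (a j)) C ≤ α) :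
    ∀ k : Fin (K + 1), ∀ b : A,
      Qsub Q a C α k b ≤ Qsub Q a C α k (a k) := by
  intro k b
  have hak : Qsub Q a C α k (a k) = Q (a k) := by
    unfold Qsub
    rw [if_neg]
    rintro ⟨j, hj, hje⟩
    exact absurd (ha hje) (ne_of_lt hj)
  rw [hak]
  unfold Qsub
  split
  · rename_i h
    obtain ⟨j, hj, rfl⟩ := h
    have hm : (0:ℝ) < max (Q (a j)) C := lt_of_lt_of_le hC (le_max_right _ _)
    have := hα j k hj
    rw [div_le_iff₀ hm] at this
    linarith
  · rename_i h
    by_cases hb : b ∈ Set.range a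
    · obtain ⟨m, rfl⟩ := hb
      have hmk : k ≤ m := by
        by_contra hc
        exact h ⟨m, lt_of_not_ge hc, rfl⟩
      exact hord k m hmk
    · exact le_trans (hout b hb) (hord k (Fin.last K) (Fin.le_last k))
end

section
/- Let A be a finite nonempty set and Q : A → ℝ. Fix K ∈ ℕ and pairwise distinct elements a_0, …, a_K of A satisfying Q(a_0) ≥ Q(a_1) ≥ … ≥ Q(a_K) and Q(a_K) ≥ Q(b) for every b ∈ A \ {a_0,…,a_K}, and let C > 0. Then there exists α₀ ≥ 0 such that for every α ≥ α₀ and every k ∈ {0,…,K}, the element a_k is a maximizer of the k-th sub-value function Q_k^sub, i.e., Q_k^sub(b) ≤ Q_k^sub(a_k) for all b ∈ A. -/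
/-- There exists `α₀ ≥ 0` such that for every suppression factor `α ≥ α₀` and
every `k ∈ {0, …, K}`, the element `a_k` is a maximizer of `Q_k^sub`. -/
theorem stmt1 {A : Type*} [Fintype A] [Nonempty A] [DecidableEq A]
    (Q : A → ℝ) (K : ℕ) (a : Fin (K + 1) → A)
    (ha : Function.Injective a)
    (hord : ∀ j k : Fin (K + 1), j ≤ k → Q (a k) ≤ Q (a j))
    (hout : ∀ b : A, b ∉ Set.range a → Q b ≤ Q (a (Fin.last K)))
    (C : ℝ) (hC : 0 < C) :
    ∃ α₀ : ℝ, 0 ≤ α₀ ∧ ∀ α : ℝ, α₀ ≤ α → ∀ k : Fin (K + 1), ∀ b : A,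
      Qsub Q a C α k b ≤ Qsub Q a C α k (a k) := by
  set M : ℝ := Finset.univ.sup' Finset.univ_nonempty Q with hM
  set m : ℝ := Finset.univ.inf' Finset.univ_nonempty Q with hm
  have hMle : ∀ b : A, Q b ≤ M := fun b =>
    Finset.le_sup' Q (Finset.mem_univ b)
  have hmle : ∀ b : A, m ≤ Q b := fun b =>
    Finset.inf'_le Q (Finset.mem_univ b)
  refine ⟨max 0 ((M - m) / C), le_max_left _ _, ?_⟩
  intro α hα k b
  have hak : Qsub Q a C α k (a k) = Q (a k) := by
    rw [Qsub, if_neg]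
    rintro ⟨j, hjk, hj⟩
    exact absurd (ha hj) (ne_of_lt hjk)
  rw [hak, Qsub]
  split_ifs with h
  · -- suppressed case
    have hα0 : 0 ≤ α := le_trans (le_max_left _ _) hα
    have h1 : (M - m) / C ≤ α := le_trans (le_max_right _ _) hα
    have h2 : (M - m) / C * C ≤ α * max (Q b) C :=
      mul_le_mul h1 (le_max_right _ _) hC.le hα0
    have h3 : (M - m) / C * C = M - m := div_mul_cancel₀ _ hC.ne'
    have : Q b - α * max (Q b) C ≤ Q b - (M - m) := by linarith [h2, h3.symm.le]
    calc Q b - α * max (Q b) C ≤ Q b - (M - m) := this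
      _ ≤ M - (M - m) := by linarith [hMle b]
      _ = m := by ring
      _ ≤ Q (a k) := hmle _
  · -- not suppressed
    by_cases hb : b ∈ Set.range a
    · obtain ⟨j, rfl⟩ := hb
      rcases lt_or_ge j k with hjk | hjk
      · exact absurd ⟨j, hjk, rfl⟩ h
      · exact hord k j hjk
    · exact le_trans (hout b hb) (hord k (Fin.last K) (Fin.le_last k))
end

section
/- Let S be an arbitrary nonempty set (the set of state–history pairs), A a finite nonempty set, and Q : S × A → ℝ a function that is bounded: |Q(s,b)| ≤ M for all s ∈ S and b ∈ A. Fix K ∈ ℕ, and suppose that for every s ∈ S there are pairwise distinct elements a_{s,0}, …, a_{s,K} of A with Q(s, a_{s,0}) ≥ … ≥ Q(s, a_{s,K}) and Q(s, a_{s,K}) ≥ Q(s, b) for every b ∈ A \ {a_{s,0},…,a_{s,K}}. Let C > 0. Then for every α ≥ 2M/C, every s ∈ S, and every k ∈ {0,…,K}, the element a_{s,k} is a maximizer over A of the function b ↦ Q_k^sub(s, b), where Q_k^sub(s, b) = Q(s,b) − α·max(Q(s,b), C) if b ∈ {a_{s,0},…,a_{s,k−1}} and Q_k^sub(s, b) =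 Q(s,b) otherwise. -/
/-- For a bounded joint action-value function `Q : S × A → ℝ` with `|Q(s,b)| ≤ M`,
any suppression factor `α ≥ 2M/C` makes `a_{s,k}` a maximizer of
`b ↦ Q_k^sub(s, b)` for every state–history pair `s` and every `k ∈ {0, …, K}`. -/
theorem stmt2 {S : Type*} [Nonempty S] {A : Type*} [Fintype A] [Nonempty A]
    [DecidableEq A]
    (Q : S → A → ℝ) (M : ℝ) (hbdd : ∀ (s : S) (b : A), |Q s b| ≤ M)
    (K : ℕ) (a : S → Fin (K + 1) → A)
    (ha : ∀ s : S, Function.Injective (a s))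
    (hord : ∀ s : S, ∀ j k : Fin (K + 1), j ≤ k → Q s (a s k) ≤ Q s (a s j))
    (hout : ∀ s : S, ∀ b : A, b ∉ Set.range (a s) → Q s b ≤ Q s (a s (Fin.last K)))
    (C : ℝ) (hC : 0 < C) :
    ∀ α : ℝ, 2 * M / C ≤ α → ∀ s : S, ∀ k : Fin (K + 1), ∀ b : A,
      Qsub (Q s) (a s) C α k b ≤ Qsub (Q s) (a s) C α k (a s k) := by
  intro α hα s k b
  obtain ⟨s₀⟩ := ‹Nonempty S›
  obtain ⟨b₀⟩ := ‹Nonempty A›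
  have hM : 0 ≤ M := le_trans (abs_nonneg _) (hbdd s₀ b₀)
  have hα0 : 0 ≤ α := le_trans (by positivity) hα
  have hαC : 2 * M ≤ α * C := by
    have := (div_le_iff₀ hC).mp hα
    linarith
  have hak : Qsub (Q s) (a s) C α k (a s k) = Q s (a s k) := by
    rw [Qsub, if_neg]
    rintro ⟨j, hj, hje⟩
    exact absurd (ha s hje) hj.ne
  rw [hak, Qsub]
  split_ifs with h
  · have hmax : C ≤ max (Q s b) C := le_max_right _ _
    have : α * C ≤ α * max (Q s b) C := mul_le_mul_of_nonneg_left hmax hα0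
    have h1 : Q s b ≤ M := le_trans (le_abs_self _) (hbdd s b)
    have h2 : -M ≤ Q s (a s k) := neg_le_of_abs_le (hbdd s _)
    linarith
  · by_cases hr : b ∈ Set.range (a s)
    · obtain ⟨j, rfl⟩ := hr
      have hjk : k ≤ j := by
        by_contra hlt
        exact h ⟨j, lt_of_not_ge hlt, rfl⟩
      exact hord s k j hjk
    · exact le_trans (hout s b hr) (hord s k (Fin.last K) (Fin.le_last k))
end

section
/- Let A be a finite nonempty set and Q : A → ℝ. Fix K ∈ ℕ and pairwise distinct elements a_0, …, a_K of A satisfying Q(a_0) ≥ Q(a_1) ≥ … ≥ Q(a_K) and Q(a_K) ≥ Q(b) for every b ∈ A \ {a_0,…,a_K}. Let C > 0, fix k ∈ {0,…,K}, and suppose α ≥ (Q(a_j) − Q(a_k))/max(Q(a_j), C) for every 0 ≤ j < k. Then a_k is a maximizer of the k-th sub-value function Q_k^sub, i.e., Q_k^sub(b) ≤ Q_k^sub(a_k) for all b ∈ A. -/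
/-- For a fixed `k ∈ {0, …, K}`, if `α ≥ (Q(a_j) − Q(a_k)) / max(Q(a_j), C)` for
every `j < k`, then `a_k` is a maximizer of the `k`-th sub-value function. -/
theorem stmt3 {A : Type*} [Fintype A] [Nonempty A] [DecidableEq A]
    (Q : A → ℝ) (K : ℕ) (a : Fin (K + 1) → A)
    (ha : Function.Injective a)
    (hord : ∀ j k : Fin (K + 1), j ≤ k → Q (a k) ≤ Q (a j))
    (hout : ∀ b : A, b ∉ Set.range a → Q b ≤ Q (a (Fin.last K)))
    (C : ℝ) (hC : 0 < C) (k : Fin (K + 1)) (α : ℝ)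
    (hα : ∀ j : Fin (K + 1), j < k →
      (Q (a j) - Q (a k)) / max (Q (a j)) C ≤ α) :
    ∀ b : A, Qsub Q a C α k b ≤ Qsub Q a C α k (a k) := by
  intro b
  have hk : Qsub Q a C α k (a k) = Q (a k) := by
    rw [Qsub, if_neg]
    rintro ⟨j, hj, hje⟩
    exact absurd (ha hje) hj.ne
  rw [hk, Qsub]
  split
  case isTrue h =>
    obtain ⟨j, hj, rfl⟩ := h
    have hm : (0:ℝ) < max (Q (a j)) C := lt_of_lt_of_le hC (le_max_right _ _)
    have := (div_le_iff₀ hm).mp (hα j hj)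
    linarith
  case isFalse h =>
    by_cases hb : b ∈ Set.range a
    · obtain ⟨j, rfl⟩ := hb
      rcases le_or_gt k j with hkj | hjk
      · exact hord k j hkj
      · exact absurd ⟨j, hjk, rfl⟩ h
    · exact le_trans (hout b hb) (hord k (Fin.last K) (Fin.le_last k))
end

section
/- Let A be a finite nonempty set and Q : A → ℝ. Fix K ∈ ℕ and pairwise distinct elements a_0, …, a_K of A satisfying Q(a_0) ≥ Q(a_1) ≥ … ≥ Q(a_K) and Q(a_K) ≥ Q(b) for every b ∈ A \ {a_0,…,a_K}. Let C > 0 and suppose α ≥ (Q(a_j) − Q(a_k))/max(Q(a_j), C) for all 0 ≤ j < k ≤ K. Then for every k ∈ {0,…,K}, the maximum of Q_k^sub over A equals Q(a_k), i.e., sup_{b ∈ A} Q_k^sub(b) = Q(a_k). -/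
/-- If the suppression factor `α` exceeds every threshold ratio, then for each
`k ∈ {0, …, K}` the maximum of `Q_k^sub` over `A` equals `Q(a_k)`. -/
theorem stmt9 {A : Type*} [Fintype A] [Nonempty A] [DecidableEq A]
    (Q : A → ℝ) (K : ℕ) (a : Fin (K + 1) → A)
    (ha : Function.Injective a)
    (hord : ∀ j k : Fin (K + 1), j ≤ k → Q (a k) ≤ Q (a j))
    (hout : ∀ b : A, b ∉ Set.range a → Q b ≤ Q (a (Fin.last K)))
    (C : ℝ) (hC : 0 < C) (α : ℝ)
    (hα : ∀ j k : Fin (K + 1), j < k →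
      (Q (a j) - Q (a k)) / max (Q (a j)) C ≤ α) :
    ∀ k : Fin (K + 1),
      Finset.univ.sup' Finset.univ_nonempty (fun b : A => Qsub Q a C α k b)
        = Q (a k) := by
  intro k
  apply le_antisymm
  · apply Finset.sup'_le
    intro b _
    unfold Qsub
    split_ifs with h
    · obtain ⟨j, hjk, hjb⟩ := h
      subst hjb
      have hm : 0 < max (Q (a j)) C := lt_of_lt_of_le hC (le_max_right _ _)
      have h2 := (div_le_iff₀ hm).mp (hα j k hjk)
      linarith
    · by_cases hb : b ∈ Set.range a
      · obtain ⟨j, rfl⟩ := hb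
        rcases le_or_gt k j with hkj | hjk
        · exact hord k j hkj
        · exact absurd ⟨j, hjk, rfl⟩ h
      · exact (hout b hb).trans (hord k (Fin.last K) (Fin.le_last k))
  · have heq : Qsub Q a C α k (a k) = Q (a k) := by
      unfold Qsub
      rw [if_neg]
      rintro ⟨j, hjk, hj⟩
      exact absurd (ha hj) (ne_of_lt hjk)
    calc Q (a k) = Qsub Q a C α k (a k) := heq.symm
      _ ≤ _ := Finset.le_sup' _ (Finset.mem_univ _)
end
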